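/- arXiv:1508.01130 — 6 statements merged into one kernel-verified Lean document; each statement's English description precedes it below -/
import Mathlib

section
/- For any integer n ≥ 2, any reals G_1,…,G_n with 0 < G_i ≤ 1 and any positive reals g_1,…,g_n, the sum over i of g_i / (∑_{k≠i} g_k/G_k) is at least the square root of the product of all G_i. -/
/-!
Put `a i = g i / G i` and `u i = √(G i)`, so that `g i = u i ^ 2 * a i`, and let `P i` be the sum of
the `a k` with `k ≠ i`. By the Engel form of Cauchy–Schwarz,
`∑ g i / P i ≥ (∑ u i * a i) ^ 2 / ∑ a i * P i`. Expanding the square and keeping only the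
off-diagonal terms `u i * u k * a i * a k`, each of which dominates `(∏ u) * a i * a k` because all
`u j ≤ 1`, gives `(∑ u i * a i) ^ 2 ≥ (∏ u) * ∑ a i * P i`, and `∏ u = √(∏ G)`.
-/

open Finset

namespace Finset

variable {ι R : Type*}

theorem prod_le_mul_of_ne [CommSemiring R] [PartialOrder R] [IsOrderedRing R]
    {s : Finset ι} {u : ι → R} {i k : ι} (hi : i ∈ s) (hk : k ∈ s) (hki : k ≠ i)
    (h0 : ∀ j ∈ s, 0 ≤ u j) (h1 : ∀ j ∈ s, u j ≤ 1) :
    ∏ j ∈ s, u j ≤ u i * u k := by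
  classical
  rw [← mul_prod_erase s u hi, ← mul_prod_erase _ u (mem_erase.mpr ⟨hki, hk⟩)]
  have hrest : ∏ j ∈ (s.erase i).erase k, u j ≤ 1 :=
    prod_le_one (fun j hj ↦ h0 j (mem_of_mem_erase (mem_of_mem_erase hj)))
      (fun j hj ↦ h1 j (mem_of_mem_erase (mem_of_mem_erase hj)))
  exact mul_le_mul_of_nonneg_left (mul_le_of_le_one_right (h0 k hk) hrest) (h0 i hi)

theorem prod_mul_sum_mul_sum_erase_le_sq [CommSemiring R] [PartialOrder R] [IsOrderedRing R]
    [DecidableEq ι] (s : Finset ι) {u a : ι → R}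
    (hu0 : ∀ j ∈ s, 0 ≤ u j) (hu1 : ∀ j ∈ s, u j ≤ 1) (ha : ∀ j ∈ s, 0 ≤ a j) :
    (∏ j ∈ s, u j) * ∑ i ∈ s, a i * ∑ k ∈ s.erase i, a k ≤ (∑ i ∈ s, u i * a i) ^ 2 := by
  rw [sq, sum_mul_sum, mul_sum]
  refine sum_le_sum fun i hi ↦ ?_
  have hterm : ∀ k ∈ s, 0 ≤ u i * a i * (u k * a k) := fun k hk ↦
    mul_nonneg (mul_nonneg (hu0 i hi) (ha i hi)) (mul_nonneg (hu0 k hk) (ha k hk))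
  calc (∏ j ∈ s, u j) * (a i * ∑ k ∈ s.erase i, a k)
      = ∑ k ∈ s.erase i, (∏ j ∈ s, u j) * (a i * a k) := by rw [mul_sum, mul_sum]
    _ ≤ ∑ k ∈ s.erase i, u i * u k * (a i * a k) := by
        refine sum_le_sum fun k hk ↦ ?_
        obtain ⟨hki, hk⟩ := mem_erase.mp hk
        exact mul_le_mul_of_nonneg_right (prod_le_mul_of_ne hi hk hki hu0 hu1)
          (mul_nonneg (ha i hi) (ha k hk))
    _ = ∑ k ∈ s.erase i, u i * a i * (u k * a k) := by
        refine sum_congr rfl fun k _ ↦ ?_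
        ring
    _ ≤ ∑ k ∈ s, u i * a i * (u k * a k) :=
        sum_le_sum_of_subset_of_nonneg (erase_subset i s) fun k hk _ ↦ hterm k hk

theorem prod_le_sum_sq_mul_div_sum_erase [Field R] [LinearOrder R] [IsStrictOrderedRing R]
    [DecidableEq ι] {s : Finset ι} (hs : s.Nontrivial) {u a : ι → R}
    (hu0 : ∀ j ∈ s, 0 ≤ u j) (hu1 : ∀ j ∈ s, u j ≤ 1) (ha : ∀ j ∈ s, 0 < a j) :
    ∏ j ∈ s, u j ≤ ∑ i ∈ s, u i ^ 2 * a i / ∑ k ∈ s.erase i, a k := by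
  have hrest : ∀ i ∈ s, 0 < ∑ k ∈ s.erase i, a k := fun i _ ↦ by
    obtain ⟨k, hk, hki⟩ := hs.exists_ne i
    exact sum_pos' (fun j hj ↦ (ha j (mem_of_mem_erase hj)).le)
      ⟨k, mem_erase.mpr ⟨hki, hk⟩, ha k hk⟩
  have hweight : ∀ i ∈ s, 0 < a i * ∑ k ∈ s.erase i, a k := fun i hi ↦
    mul_pos (ha i hi) (hrest i hi)
  calc ∏ j ∈ s, u j
      ≤ (∑ i ∈ s, u i * a i) ^ 2 / ∑ i ∈ s, a i * ∑ k ∈ s.erase i, a k :=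
        (le_div_iff₀ (sum_pos hweight hs.nonempty)).mpr <|
          prod_mul_sum_mul_sum_erase_le_sq s hu0 hu1 fun j hj ↦ (ha j hj).le
    _ ≤ ∑ i ∈ s, (u i * a i) ^ 2 / (a i * ∑ k ∈ s.erase i, a k) :=
        sq_sum_div_le_sum_sq_div s _ hweight
    _ = ∑ i ∈ s, u i ^ 2 * a i / ∑ k ∈ s.erase i, a k := by
        refine sum_congr rfl fun i hi ↦ ?_
        have := (ha i hi).ne'
        field_simp

end Finset

theorem stmt0 (n : ℕ) (hn : 2 ≤ n) (G g : Fin n → ℝ)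
    (hG : ∀ i, 0 < G i ∧ G i ≤ 1) (hg : ∀ i, 0 < g i) :
    ∑ i, g i / (∑ k ∈ Finset.univ.erase i, g k / G k) ≥
      Real.sqrt (∏ i, G i) := by
  have : Nontrivial (Fin n) := Fin.nontrivial_iff_two_le.mpr hn
  have key := prod_le_sum_sq_mul_div_sum_erase (s := univ) univ_nontrivial
    (u := fun i ↦ √(G i)) (a := fun i ↦ g i / G i) (fun j _ ↦ Real.sqrt_nonneg _)
    (fun j _ ↦ Real.sqrt_le_one.mpr (hG j).2) (fun j _ ↦ div_pos (hg j) (hG j).1)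
  rw [Real.sqrt_prod _ fun i _ ↦ (hG i).1.le]
  refine key.trans_eq (sum_congr rfl fun i _ ↦ ?_)
  rw [Real.sq_sqrt (hG i).1.le, mul_div_cancel₀ _ (hG i).1.ne']
end

section
/- Let v : 2^[m] → ℝ be a fractionally subadditive (XOS) valuation, i.e. there is a finite nonempty family of additive set functions ξ_k with v(S) = max_k ξ_k(S) for all S, where each ξ_k is additive with nonnegative values on singletons. Then for every set S ⊆ [m], v(S) ≥ ∑_{j ∈ [m]} (v(S) − v(S \ {j})). -/
/-! Choose an additive clause `ξ k` attaining the maximum at `S`. Since `v ≥ ξ k` everywhere,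
each marginal `v S - v (S \ {j})` is at most `ξ k j` for `j ∈ S`, and it vanishes for `j ∉ S`;
summing gives at most `ξ k (S) = v S`. -/

section Marginals

variable {α β : Type*} [DecidableEq α] [AddCommGroup β]

theorem Finset.sum_sub_erase_eq_sum_univ_sub_erase [Fintype α] (v : Finset α → β)
    (S : Finset α) : ∑ j ∈ S, (v S - v (S.erase j)) = ∑ j, (v S - v (S.erase j)) :=
  Finset.sum_subset (Finset.subset_univ S) fun j _ hj => by
    rw [Finset.erase_eq_of_notMem hj, sub_self]

theorem Finset.sum_sub_erase_le_of_additive_le [PartialOrder β] [IsOrderedAddMonoid β]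
    (v : Finset α → β) (a : α → β) (S : Finset α)
    (hS : v S = ∑ j ∈ S, a j) (hle : ∀ j ∈ S, ∑ i ∈ S.erase j, a i ≤ v (S.erase j)) :
    ∑ j ∈ S, (v S - v (S.erase j)) ≤ v S :=
  calc ∑ j ∈ S, (v S - v (S.erase j))
      ≤ ∑ j ∈ S, a j := Finset.sum_le_sum fun j hj => by
        have hmarg := hle j hj
        rw [Finset.sum_erase_eq_sub hj, ← hS] at hmarg
        exact sub_le_comm.mp hmarg
    _ = v S := hS.symm

end Marginals

theorem stmt1_general (m : ℕ) (ι : Type*) [Fintype ι] [Nonempty ι]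
    (ξ : ι → Fin m → ℝ)
    (v : Finset (Fin m) → ℝ)
    (hv : ∀ S : Finset (Fin m),
      v S = Finset.univ.sup' Finset.univ_nonempty (fun k => ∑ j ∈ S, ξ k j)) :
    ∀ S : Finset (Fin m), v S ≥ ∑ j : Fin m, (v S - v (S.erase j)) := by
  intro S
  obtain ⟨k, -, hk⟩ :=
    Finset.exists_mem_eq_sup' Finset.univ_nonempty (fun k => ∑ j ∈ S, ξ k j)
  rw [ge_iff_le, ← Finset.sum_sub_erase_eq_sum_univ_sub_erase]
  refine Finset.sum_sub_erase_le_of_additive_le v (ξ k) S (by rw [hv, hk]) fun j _ => ?_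
  rw [hv]
  exact Finset.le_sup' (fun k => ∑ i ∈ S.erase j, ξ k i) (Finset.mem_univ k)

theorem stmt1 (m : ℕ) (ι : Type*) [Fintype ι] [Nonempty ι]
    (ξ : ι → Fin m → ℝ) (hξ : ∀ k j, 0 ≤ ξ k j)
    (v : Finset (Fin m) → ℝ)
    (hv : ∀ S : Finset (Fin m),
      v S = Finset.univ.sup' Finset.univ_nonempty (fun k => ∑ j ∈ S, ξ k j)) :
    ∀ S : Finset (Fin m), v S ≥ ∑ j : Fin m, (v S - v (S.erase j)) :=
  stmt1_general m ι ξ v hv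
end

section
/- For every real t ∈ [0,1] and every λ ∈ [0,1], (1/2)(1 + t²) + (2λ/3)(1 − t^{3/2}) ≥ (3 + 4λ − λ⁴)/6, with the minimum over t attained at t = λ². -/
/-!
Writing `t = s ^ 2` with `s = √t`, six times the difference of the two sides is
`3 s⁴ - 4 λ s³ + λ⁴ = (s - λ)² (2 s² + (s + λ)²)`, which vanishes exactly at `s = λ`.
-/

lemma Real.rpow_three_halves_eq_sqrt_pow {x : ℝ} (hx : 0 ≤ x) :
    x ^ ((3 : ℝ) / 2) = √x ^ 3 := by
  rw [Real.sqrt_eq_rpow, ← Real.rpow_natCast, ← Real.rpow_mul hx]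
  norm_num

lemma four_mul_mul_pow_three_le (a s : ℝ) : 4 * a * s ^ 3 ≤ 3 * s ^ 4 + a ^ 4 := by
  have key : 0 ≤ (s - a) ^ 2 * (2 * s ^ 2 + (s + a) ^ 2) := by positivity
  linear_combination key

theorem stmt4 (t lam : ℝ) (ht : t ∈ Set.Icc (0:ℝ) 1) (hlam : lam ∈ Set.Icc (0:ℝ) 1) :
    (1/2) * (1 + t ^ 2) + (2 * lam / 3) * (1 - t ^ ((3:ℝ)/2)) ≥
      (3 + 4 * lam - lam ^ 4) / 6 ∧
    (1/2) * (1 + (lam ^ 2) ^ 2) + (2 * lam / 3) * (1 - (lam ^ 2) ^ ((3:ℝ)/2)) =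
      (3 + 4 * lam - lam ^ 4) / 6 := by
  constructor
  · have hsq : √t ^ 2 = t := Real.sq_sqrt ht.1
    rw [Real.rpow_three_halves_eq_sqrt_pow ht.1]
    nth_rw 1 [← hsq]
    nlinarith [four_mul_mul_pow_three_le lam √t]
  · rw [Real.rpow_three_halves_eq_sqrt_pow (sq_nonneg lam), Real.sqrt_sq hlam.1]
    ring
end

section
/- Let n ≥ 2 and k be integers with 1 ≤ k ≤ n, let a be a real with 0 < a ≤ 1 and g > 0 a real. Then k·g/((k−1)·g/a + n − k) + (n − k)/(k·g/a + n − k − 1) ≥ a. -/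
/- Put x = g/a. The first term is a · kx/((k-1)x + m) with m = n - k, and since a ≤ 1 the second
term is at least a times itself, so it suffices that kx/((k-1)x + m) + m/(kx + m - 1) ≥ 1.
Clearing denominators, this is kx² - x + m ≥ 0, which holds as soon as m ≥ 1; when m = 0 the
second term vanishes and the first is ak/(k-1) ≥ a. -/

lemma one_le_div_add_div {k m x : ℝ} (hk : 1 ≤ k) (hm : 1 ≤ m) (hx : 0 < x) :
    1 ≤ k * x / ((k - 1) * x + m) + m / (k * x + m - 1) := by
  have hD₁ : 0 < (k - 1) * x + m := by nlinarith
  have hD₂ : 0 < k * x + m - 1 := by nlinarith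
  rw [div_add_div _ _ hD₁.ne' hD₂.ne', one_le_div (mul_pos hD₁ hD₂)]
  have hquad : 0 ≤ k * x ^ 2 - x + m := by nlinarith [sq_nonneg (x - 1)]
  linear_combination hquad

lemma le_div_add_div {k m a g : ℝ} (hk : 1 ≤ k) (hm : 1 ≤ m) (ha : 0 < a) (ha1 : a ≤ 1)
    (hg : 0 < g) :
    a ≤ k * g / ((k - 1) * g / a + m) + m / (k * g / a + m - 1) := by
  have hfirst : k * g / ((k - 1) * g / a + m) = a * (k * (g / a) / ((k - 1) * (g / a) + m)) := by
    rw [← mul_div_assoc, mul_div_assoc (k - 1)]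
    congr 1
    field_simp
  rw [hfirst, mul_div_assoc k g a]
  have hx : 0 < g / a := div_pos hg ha
  generalize g / a = x at hx ⊢
  have hsecond : 0 ≤ m / (k * x + m - 1) := by
    apply div_nonneg (by linarith)
    nlinarith
  calc a ≤ a * (k * x / ((k - 1) * x + m) + m / (k * x + m - 1)) :=
        le_mul_of_one_le_right ha.le (one_le_div_add_div hk hm hx)
    _ = a * (k * x / ((k - 1) * x + m)) + a * (m / (k * x + m - 1)) := mul_add _ _ _
    _ ≤ a * (k * x / ((k - 1) * x + m)) + m / (k * x + m - 1) := by
        gcongr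
        exact mul_le_of_le_one_left hsecond ha1

lemma le_mul_div_div {k a g : ℝ} (hk : 1 < k) (ha : 0 < a) (hg : 0 < g) :
    a ≤ k * g / ((k - 1) * g / a) := by
  rw [div_div_eq_mul_div, mul_right_comm, mul_div_mul_right _ _ hg.ne',
    le_div_iff₀ (by linarith)]
  nlinarith

theorem stmt6 (n k : ℕ) (hn : 2 ≤ n) (hk1 : 1 ≤ k) (hkn : k ≤ n)
    (a g : ℝ) (ha : 0 < a) (ha1 : a ≤ 1) (hg : 0 < g) :
    (k : ℝ) * g / (((k : ℝ) - 1) * g / a + ((n : ℝ) - (k : ℝ))) +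
      ((n : ℝ) - (k : ℝ)) / ((k : ℝ) * g / a + ((n : ℝ) - (k : ℝ) - 1)) ≥ a := by
  rcases hkn.eq_or_lt with rfl | hlt
  · have hk : (1 : ℝ) < k := by exact_mod_cast hn
    simpa using le_mul_div_div hk ha hg
  · have hm : (1 : ℝ) ≤ n - k := by
      rw [le_sub_iff_add_le']
      exact_mod_cast hlt
    have hk : (1 : ℝ) ≤ k := by exact_mod_cast hk1
    simpa only [add_sub_assoc] using le_div_add_div hk hm ha ha1 hg
end

section
/- Let n ≥ 2, let G_i ∈ (0,1] and g_i > 0 for i ∈ {1,…,n}, and let A_{ij} = ∑_{t ≠ i, t ≠ j} g_t/G_t for distinct i, j. If g_i/(g_j/G_j + A_{ij}) = g_j/(g_i/G_i + A_{ij}) (i.e. H_i = H_j), then: (1) g_i = g_j if and only if G_i = G_j; and (2) if g_i = r·g_j with r ≥ 1, then G_i ≥ r²·G_j. -/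
/-! Clearing denominators, `H_i = H_j` says `φ_i(g_i) = φ_j(g_j)` with `φ_t(x) = x (x / G_t + A_{ij})`.
For equal `g` this forces `G_i = G_j`; for equal `G` it forces `g_i = g_j`, since `φ` is then
a single strictly increasing function on `(0, ∞)`. If `g_i = r g_j` with `r ≥ 1`, the linear part
`A g_i` is at least `A g_j`, so the quadratic parts satisfy `r² g_j² / G_i ≤ g_j² / G_j`. -/

lemma strictMonoOn_mul_div_add {G A : ℝ} (hG : 0 < G) (hA : 0 ≤ A) :
    StrictMonoOn (fun x : ℝ => x * (x / G + A)) (Set.Ioi 0) := by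
  intro x (hx : 0 < x) y (hy : 0 < y) hxy
  have hdiv : x / G < y / G := div_lt_div_of_pos_right hxy hG
  have hx_nonneg : 0 ≤ x / G + A := by positivity
  calc x * (x / G + A) ≤ x * (y / G + A) := by gcongr
    _ < y * (y / G + A) := by gcongr

section
variable {a b G G' A : ℝ}

lemma eq_of_mul_div_add_eq_of_eq (ha : 0 < a) (hG : 0 < G) (hG' : 0 < G')
    (h : a * (a / G + A) = b * (b / G' + A)) (hab : a = b) : G = G' := by
  subst hab
  have hdiv : a ^ 2 / G = a ^ 2 / G' := by linear_combination h
  rw [div_eq_div_iff hG.ne' hG'.ne'] at hdiv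
  exact (mul_left_cancel₀ (pow_ne_zero 2 ha.ne') hdiv).symm

lemma sq_mul_le_of_mul_div_add_eq {r : ℝ} (hA : 0 ≤ A) (hb : 0 < b) (hG : 0 < G)
    (hG' : 0 < G') (h : a * (a / G + A) = b * (b / G' + A)) (hr : 1 ≤ r) (hab : a = r * b) :
    r ^ 2 * G' ≤ G := by
  subst hab
  have hquad : r ^ 2 * b ^ 2 / G ≤ b ^ 2 / G' := by
    have hlin : A * b ≤ A * (r * b) := by nlinarith [mul_nonneg hA hb.le]
    linear_combination h + hlin
  rw [div_le_div_iff₀ hG hG', mul_right_comm, mul_comm (b ^ 2)] at hquad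
  exact le_of_mul_le_mul_right hquad (pow_pos hb 2)

end

theorem stmt7_general (n : ℕ) (G g : Fin n → ℝ)
    (hG : ∀ t, 0 < G t ∧ G t ≤ 1) (hg : ∀ t, 0 < g t)
    (i j : Fin n)
    (A : ℝ) (hA : A = ∑ t ∈ (Finset.univ.erase i).erase j, g t / G t)
    (hH : g i / (g j / G j + A) = g j / (g i / G i + A)) :
    (g i = g j ↔ G i = G j) ∧
    (∀ r : ℝ, 1 ≤ r → g i = r * g j → G i ≥ r ^ 2 * G j) := by
  have hGi := (hG i).1
  have hGj := (hG j).1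
  have hA_nonneg : 0 ≤ A := hA ▸ Finset.sum_nonneg fun t _ => (div_pos (hg t) (hG t).1).le
  have hcross : g i * (g i / G i + A) = g j * (g j / G j + A) :=
    (div_eq_div_iff (by have := hg j; positivity) (by have := hg i; positivity)).mp hH
  refine ⟨⟨eq_of_mul_div_add_eq_of_eq (hg i) hGi hGj hcross, fun hGij => ?_⟩,
    fun r hr hgij => sq_mul_le_of_mul_div_add_eq hA_nonneg (hg j) hGi hGj hcross hr hgij⟩
  rw [← hGij] at hcross
  exact (strictMonoOn_mul_div_add hGi hA_nonneg).injOn (hg i) (hg j) hcross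

theorem stmt7 (n : ℕ) (hn : 2 ≤ n) (G g : Fin n → ℝ)
    (hG : ∀ t, 0 < G t ∧ G t ≤ 1) (hg : ∀ t, 0 < g t)
    (i j : Fin n) (hij : i ≠ j)
    (A : ℝ) (hA : A = ∑ t ∈ (Finset.univ.erase i).erase j, g t / G t)
    (hH : g i / (g j / G j + A) = g j / (g i / G i + A)) :
    (g i = g j ↔ G i = G j) ∧
    (∀ r : ℝ, 1 ≤ r → g i = r * g j → G i ≥ r ^ 2 * G j) :=
  stmt7_general n G g hG hg i j A hA hH
end

section
/- Let F : [0,∞) → [0,1] be nondecreasing with F(x) ≤ min(1, (x+A)/v) for all x ≥ 0, where A = sup_{x≥0}(F(x)·v − x) ≥ 0 and v > 0. Define F̂ by F̂(x)=0 on [0,x₀] and F̂(x)=(x+A)/v on (x₀, v−A], with x₀ chosen so that ∫₀^{v−A} F̂ = ∫₀^{v−A} F. Then ∫₀^{v−A} √(F̂(x)) dx ≤ ∫₀^{v−A} √(F(x)) dx. -/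
open MeasureTheory

theorem stmt19 (v A x₀ : ℝ) (hv : 0 < v) (hA : 0 ≤ A)
    (F : ℝ → ℝ) (hFmono : MonotoneOn F (Set.Ici 0))
    (hFrange : ∀ x : ℝ, 0 ≤ x → 0 ≤ F x ∧ F x ≤ min 1 ((x + A) / v))
    (hAsup : IsLUB {y : ℝ | ∃ x : ℝ, 0 ≤ x ∧ y = F x * v - x} A)
    (hx₀0 : 0 ≤ x₀) (hx₀ : x₀ ≤ v - A)
    (Fhat : ℝ → ℝ)
    (hFhat : ∀ x, Fhat x = if x ≤ x₀ then 0 else (x + A) / v)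
    (heq : (∫ x in (0:ℝ)..(v - A), Fhat x) = ∫ x in (0:ℝ)..(v - A), F x) :
    (∫ x in (0:ℝ)..(v - A), Real.sqrt (Fhat x)) ≤
      ∫ x in (0:ℝ)..(v - A), Real.sqrt (F x) := by
  set b := v - A with hbdef
  have hb : 0 ≤ b := le_trans hx₀0 hx₀
  have hsub : Set.uIcc (0:ℝ) b ⊆ Set.Ici 0 := by
    rw [Set.uIcc_of_le hb]; exact fun x hx => hx.1
  have hFhmono : MonotoneOn Fhat (Set.Ici 0) := by
    intro x hx y hy hxy
    rw [hFhat, hFhat]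
    by_cases h1 : y ≤ x₀
    · rw [if_pos (hxy.trans h1), if_pos h1]
    · rw [if_neg h1]
      by_cases h2 : x ≤ x₀
      · rw [if_pos h2]
        have : (0:ℝ) ≤ y := hy
        positivity
      · rw [if_neg h2]
        gcongr
  have hFint : IntervalIntegrable F volume 0 b :=
    (hFmono.mono hsub).intervalIntegrable
  have hFhint : IntervalIntegrable Fhat volume 0 b :=
    (hFhmono.mono hsub).intervalIntegrable
  have hsF : MonotoneOn (fun x => Real.sqrt (F x)) (Set.Ici 0) :=
    fun x hx y hy hxy => Real.sqrt_le_sqrt (hFmono hx hy hxy)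
  have hsFint : IntervalIntegrable (fun x => Real.sqrt (F x)) volume 0 b :=
    (hsF.mono hsub).intervalIntegrable
  have hsFh : MonotoneOn (fun x => Real.sqrt (Fhat x)) (Set.Ici 0) :=
    fun x hx y hy hxy => Real.sqrt_le_sqrt (hFhmono hx hy hxy)
  have hsFhint : IntervalIntegrable (fun x => Real.sqrt (Fhat x)) volume 0 b :=
    (hsFh.mono hsub).intervalIntegrable
  by_cases hpos : 0 < x₀ + A
  · set c := Real.sqrt ((x₀ + A) / v) with hcdef
    have hcpos : 0 < c := Real.sqrt_pos.2 (by positivity)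
    have key : ∀ x ∈ Set.Icc (0:ℝ) b,
        Real.sqrt (Fhat x) ≤ Real.sqrt (F x) + (Fhat x - F x) / c := by
      rintro x ⟨hx0, hxb⟩
      obtain ⟨hF0, hF1⟩ := hFrange x hx0
      have hsF2 : Real.sqrt (F x) ^ 2 = F x := Real.sq_sqrt hF0
      have hsFnn : 0 ≤ Real.sqrt (F x) := Real.sqrt_nonneg _
      rw [hFhat]
      by_cases h : x ≤ x₀
      · rw [if_pos h, Real.sqrt_zero]
        have hFle : F x ≤ (x₀ + A) / v :=
          le_trans (le_trans hF1 (min_le_right _ _)) (by gcongr)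
        have h1 : Real.sqrt (F x) ≤ c := Real.sqrt_le_sqrt hFle
        have h2 : F x / c ≤ Real.sqrt (F x) := by
          rw [div_le_iff₀ hcpos]; nlinarith
        have h3 : (0 - F x) / c = -(F x / c) := by ring
        linarith [h2, h3]
      · rw [if_neg h]
        push_neg at h
        set g := (x + A) / v with hgdef
        have hgF : F x ≤ g := le_trans hF1 (min_le_right _ _)
        have hcg : (x₀ + A) / v ≤ g := by rw [hgdef]; gcongr
        have h1 : Real.sqrt (F x) ≤ Real.sqrt g := Real.sqrt_le_sqrt hgF
        have h2 : c ≤ Real.sqrt g := Real.sqrt_le_sqrt hcg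
        have hg0 : 0 ≤ g := by positivity
        have hsg2 : Real.sqrt g ^ 2 = g := Real.sq_sqrt hg0
        have hkey : (Real.sqrt g - Real.sqrt (F x)) * c ≤ g - F x := by
          nlinarith [mul_nonneg (sub_nonneg.2 h1) (sub_nonneg.2 h2)]
        have : Real.sqrt g - Real.sqrt (F x) ≤ (g - F x) / c :=
          (le_div_iff₀ hcpos).2 hkey
        linarith
    have hrhsint : IntervalIntegrable
        (fun x => Real.sqrt (F x) + (Fhat x - F x) / c) volume 0 b :=
      hsFint.add ((hFhint.sub hFint).div_const c)
    calc (∫ x in (0:ℝ)..b, Real.sqrt (Fhat x))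
        ≤ ∫ x in (0:ℝ)..b, (Real.sqrt (F x) + (Fhat x - F x) / c) :=
          intervalIntegral.integral_mono_on hb hsFhint hrhsint key
      _ = (∫ x in (0:ℝ)..b, Real.sqrt (F x)) +
          ((∫ x in (0:ℝ)..b, Fhat x) - ∫ x in (0:ℝ)..b, F x) / c := by
          rw [intervalIntegral.integral_add hsFint ((hFhint.sub hFint).div_const c),
            intervalIntegral.integral_div, intervalIntegral.integral_sub hFhint hFint]
      _ = ∫ x in (0:ℝ)..b, Real.sqrt (F x) := by
          rw [heq]; ring
  · push_neg at hpos
    have hx0 : x₀ = 0 := le_antisymm (by linarith) hx₀0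
    have hA0 : A = 0 := le_antisymm (by linarith) hA
    have hFle : ∀ x ∈ Set.Icc (0:ℝ) b, F x ≤ Fhat x := by
      rintro x ⟨hx0', hxb⟩
      rw [hFhat, hx0]
      by_cases h : x ≤ 0
      · rw [if_pos h]
        have hxe : x = 0 := le_antisymm h hx0'
        have := (hFrange 0 le_rfl).2
        rw [hA0] at this
        simpa [hxe] using this.trans (min_le_right _ _)
      · rw [if_neg h]
        exact ((hFrange x hx0').2).trans (min_le_right _ _)
    have hzero : ∫ x in (0:ℝ)..b, (Fhat x - F x) = 0 := by
      rw [intervalIntegral.integral_sub hFhint hFint, heq]; ring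
    rw [intervalIntegral.integral_of_le hb] at hzero
    have hnn : 0 ≤ᵐ[volume.restrict (Set.Ioc 0 b)] fun x => Fhat x - F x := by
      filter_upwards [ae_restrict_mem measurableSet_Ioc] with x hx
      have := hFle x ⟨le_of_lt hx.1, hx.2⟩
      simp only [Pi.zero_apply]
      linarith
    have hint' : Integrable (fun x => Fhat x - F x) (volume.restrict (Set.Ioc 0 b)) :=
      (hFhint.sub hFint).1
    have hae : (fun x => Fhat x - F x) =ᵐ[volume.restrict (Set.Ioc 0 b)] 0 :=
      (integral_eq_zero_iff_of_nonneg_ae hnn hint').1 hzero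
    have heqae : (fun x => Real.sqrt (Fhat x))
        =ᵐ[volume.restrict (Set.Ioc 0 b)] fun x => Real.sqrt (F x) := by
      filter_upwards [hae] with x hx
      have : Fhat x = F x := by
        have : Fhat x - F x = 0 := hx
        linarith
      rw [this]
    rw [intervalIntegral.integral_of_le hb, intervalIntegral.integral_of_le hb]
    exact le_of_eq (integral_congr_ae heqae)
end
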